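/- Let d₁, d₂, d₃ be even integers with dᵢ ≥ 4, let ε ∈ (0, 1/2), and let M₂ be a Schwartz function on ℝ⁴. Then there is a constant C > 0 (depending on M₂, ε and the dᵢ) such that for every c ∈ ℝ∖{0}: ∫_{(ℝ^×)³} | M₂( c/[a], a₁c/[a], a₂c/[a], a₃ ) | · max(1, |a₁|)^{1−d₁/2} · |[a]/c|^{−d₂/2} · {a}^{d/2−1} d^×a ≤ C · min(1, |c|)^{min(d₁,d₂,d₃)/2 − 1 − ε} · max(1, |c|)^{−1}. (Lemma 9.7 of the paper, archimedean case F = ℝ.) -/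

import Mathlib

/-!
The substitution `a₁ = c / (b₁ b₃)`, `a₂ = c / (b₂ b₃)`, `a₃ = b₃` preserves `d^×a` and turns the
argument of `M₂` into `(b₁ b₂ b₃ / c, b₂, b₁, b₃)`; the integrand becomes
`‖M₂ (…)‖ · min (1, |c| / |b₁ b₃|) ^ (d₁/2 - 1) · |b₁| ^ (d₂/2) |b₂| |b₃| ^ (d₃/2) / |c|`.
Bounding the minimum by `(|c| / |b₁ b₃|) ^ θ` (`0 ≤ θ ≤ d₁/2 - 1`) and the Schwartz decay in the
first argument by `|b₁ b₂ b₃ / c| ^ (-σ)` (`0 ≤ σ < 1`) leaves `|c| ^ (θ + σ - 1)` times a product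
of three convergent integrals `∫ |b| ^ e (1 + |b|) ^ (-k) d^×b` with `0 < e < k`.
Taking `θ = σ = 0` gives the bound `|c|⁻¹` for `|c| ≥ 1`; taking `θ = m/2 - 1 - ε/2`,
`σ = 1 - ε/2` with `m = min dᵢ` gives `|c| ^ (m/2 - 1 - ε)` for `|c| ≤ 1`.
-/

open MeasureTheory

noncomputable section

/-- The multiplicative Haar measure `d^×a = da/|a|` on `ℝ^× = ℝ ∖ {0}`. -/
def mulHaar : Measure ℝ := volume.withDensity fun a => ENNReal.ofReal |a|⁻¹

/-- The product measure `d^×a₁ d^×a₂ d^×a₃` on `(ℝ^×)³`. -/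
def mulHaar3 : Measure (ℝ × ℝ × ℝ) := mulHaar.prod (mulHaar.prod mulHaar)

open Set
open scoped ENNReal

instance : SFinite mulHaar := by unfold mulHaar; infer_instance

theorem lintegral_mulHaar (f : ℝ → ℝ≥0∞) :
    ∫⁻ a, f a ∂mulHaar = ∫⁻ a, ENNReal.ofReal |a|⁻¹ * f a :=
  lintegral_withDensity_eq_lintegral_mul_non_measurable _ (by fun_prop)
    (ae_of_all _ fun _ => ENNReal.ofReal_lt_top) f

theorem ae_mulHaar_ne_zero : ∀ᵐ a ∂mulHaar, a ≠ 0 :=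
  (withDensity_absolutelyContinuous _ _).ae_le (compl_mem_ae_iff.2 (measure_singleton 0))

theorem lintegral_mulHaar_comp_div {r : ℝ} (hr : r ≠ 0) (f : ℝ → ℝ≥0∞) :
    ∫⁻ a, f (r / a) ∂mulHaar = ∫⁻ a, f a ∂mulHaar := by
  have hinv : Function.Involutive (r / · : ℝ → ℝ) := fun _ => div_div_cancel₀ hr
  have himage : (r / ·) '' {0}ᶜ = ({0}ᶜ : Set ℝ) := by
    rw [hinv.image_eq_preimage_symm]
    ext x
    simp [hr]
  have hderiv (x : ℝ) (hx : x ∈ ({0}ᶜ : Set ℝ)) :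
      HasDerivWithinAt (r / ·) (-(r / x ^ 2)) {0}ᶜ x := by
    simpa [div_eq_mul_inv] using ((hasDerivAt_inv hx).const_mul r).hasDerivWithinAt
  rw [lintegral_mulHaar, lintegral_mulHaar, ← restrict_compl_singleton (μ := volume) (0 : ℝ)]
  conv_rhs => rw [← himage, lintegral_image_eq_lintegral_abs_deriv_mul
    (measurableSet_singleton 0).compl hderiv hinv.injective.injOn]
  refine setLIntegral_congr_fun (measurableSet_singleton 0).compl fun x (hx : x ≠ 0) => ?_
  rw [← mul_assoc, ← ENNReal.ofReal_mul (abs_nonneg _)]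
  congr 2
  rw [abs_neg, abs_div, abs_div, abs_pow]
  field_simp

theorem lintegral_mulHaar3 {f : ℝ × ℝ × ℝ → ℝ≥0∞} (hf : Measurable f) :
    ∫⁻ a, f a ∂mulHaar3 = ∫⁻ a₃, ∫⁻ a₁, ∫⁻ a₂, f (a₁, a₂, a₃) ∂mulHaar ∂mulHaar ∂mulHaar := by
  have hf₁ (a₁ : ℝ) : Measurable fun p : ℝ × ℝ => f (a₁, p) := hf.comp measurable_prodMk_left
  calc ∫⁻ a, f a ∂mulHaar3
      = ∫⁻ a₁, ∫⁻ a₃, ∫⁻ a₂, f (a₁, a₂, a₃) ∂mulHaar ∂mulHaar ∂mulHaar := by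
        rw [mulHaar3, lintegral_prod _ hf.aemeasurable]
        refine lintegral_congr fun a₁ => ?_
        rw [lintegral_prod _ (hf₁ a₁).aemeasurable,
          lintegral_lintegral_swap (hf₁ a₁).aemeasurable]
    _ = ∫⁻ a₃, ∫⁻ a₁, ∫⁻ a₂, f (a₁, a₂, a₃) ∂mulHaar ∂mulHaar ∂mulHaar :=
        have hswap : Measurable fun q : (ℝ × ℝ) × ℝ => f (q.1.1, q.2, q.1.2) :=
          hf.comp (by fun_prop)
        lintegral_lintegral_swap hswap.lintegral_prod_right'.aemeasurable

theorem lintegral_mulHaar3_comp_subst {c : ℝ} (hc : c ≠ 0) {f : ℝ × ℝ × ℝ → ℝ≥0∞}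
    (hf : Measurable f) :
    ∫⁻ a, f a ∂mulHaar3 = ∫⁻ b, f (c / (b.1 * b.2.2), c / (b.2.1 * b.2.2), b.2.2) ∂mulHaar3 := by
  rw [lintegral_mulHaar3 hf,
    lintegral_mulHaar3 (f := fun b => f (c / (b.1 * b.2.2), c / (b.2.1 * b.2.2), b.2.2))
      (hf.comp (by fun_prop))]
  refine lintegral_congr_ae ?_
  filter_upwards [ae_mulHaar_ne_zero] with b₃ hb₃
  have hcb : c / b₃ ≠ 0 := div_ne_zero hc hb₃
  simp only [mul_comm _ b₃, ← div_div]
  rw [← lintegral_mulHaar_comp_div hcb]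
  exact lintegral_congr fun a₁ => (lintegral_mulHaar_comp_div hcb _).symm

theorem ae_mulHaar3_ne_zero : ∀ᵐ b ∂mulHaar3, b.1 ≠ 0 ∧ b.2.1 ≠ 0 ∧ b.2.2 ≠ 0 := by
  have hsnd : ∀ᵐ b ∂mulHaar3, b.2.1 ≠ 0 ∧ b.2.2 ≠ 0 :=
    Measure.quasiMeasurePreserving_snd.ae <|
      (Measure.quasiMeasurePreserving_fst.ae ae_mulHaar_ne_zero).and
        (Measure.quasiMeasurePreserving_snd.ae ae_mulHaar_ne_zero)
  exact (Measure.quasiMeasurePreserving_fst.ae ae_mulHaar_ne_zero).and hsnd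

theorem lintegral_mulHaar3_mul {g₁ g₂ g₃ : ℝ → ℝ≥0∞} (h₁ : Measurable g₁) (h₂ : Measurable g₂)
    (h₃ : Measurable g₃) :
    ∫⁻ b, g₁ b.1 * (g₂ b.2.1 * g₃ b.2.2) ∂mulHaar3
      = (∫⁻ x, g₁ x ∂mulHaar) * ((∫⁻ x, g₂ x ∂mulHaar) * ∫⁻ x, g₃ x ∂mulHaar) := by
  rw [mulHaar3,
    lintegral_prod_mul (g := fun p : ℝ × ℝ => g₂ p.1 * g₃ p.2) h₁.aemeasurable (by fun_prop),
    lintegral_prod_mul h₂.aemeasurable h₃.aemeasurable]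

theorem lintegral_eq_two_mul_setLIntegral_Ioi_of_even {g : ℝ → ℝ≥0∞} (hg : ∀ x, g (-x) = g x) :
    ∫⁻ x, g x = 2 * ∫⁻ x in Ioi 0, g x := by
  have hIic : ∫⁻ x in Iic 0, g x = ∫⁻ x in Ioi 0, g x := by
    have := (Measure.measurePreserving_neg (volume : Measure ℝ)).setLIntegral_comp_preimage_emb
      measurableEmbedding_neg g (Ioi 0)
    simpa [hg, setLIntegral_congr Iio_ae_eq_Iic] using this
  rw [← lintegral_add_compl g measurableSet_Ioi, compl_Ioi, hIic, two_mul]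

theorem one_add_rpow_neg_le_rpow_neg {x s k : ℝ} (hx : 0 < x) (hs : 0 ≤ s) (hsk : s ≤ k) :
    (1 + x) ^ (-k) ≤ x ^ (-s) :=
  calc (1 + x) ^ (-k) ≤ (1 + x) ^ (-s) :=
        Real.rpow_le_rpow_of_exponent_le (by linarith) (neg_le_neg hsk)
    _ ≤ x ^ (-s) := Real.rpow_le_rpow_of_nonpos hx (by linarith) (neg_nonpos.2 hs)

def decayWeight (k e b : ℝ) : ℝ := |b| ^ e * (1 + |b|) ^ (-k)

theorem decayWeight_nonneg (k e b : ℝ) : 0 ≤ decayWeight k e b := by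
  unfold decayWeight; positivity

theorem measurable_decayWeight (k e : ℝ) : Measurable (decayWeight k e) := by
  unfold decayWeight; fun_prop

theorem lintegral_mulHaar_decayWeight_lt_top {k e : ℝ} (he : 0 < e) (hek : e < k) :
    ∫⁻ b, ENNReal.ofReal (decayWeight k e b) ∂mulHaar < ∞ := by
  have hle {s : ℝ} (hs : 0 ≤ s) (hsk : s ≤ k) (x : ℝ) (hx : 0 < x) :
      ENNReal.ofReal |x|⁻¹ * ENNReal.ofReal (decayWeight k e x)
        ≤ ENNReal.ofReal (x ^ (e - 1 - s)) := by
    rw [← ENNReal.ofReal_mul (by positivity), decayWeight, abs_of_pos hx]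
    refine ENNReal.ofReal_le_ofReal ?_
    calc x⁻¹ * (x ^ e * (1 + x) ^ (-k)) ≤ x⁻¹ * (x ^ e * x ^ (-s)) := by
          gcongr; exact one_add_rpow_neg_le_rpow_neg hx hs hsk
      _ = x ^ (e - 1 - s) := by
          rw [← Real.rpow_neg_one, ← Real.rpow_add hx, ← Real.rpow_add hx]; ring_nf
  have hnear : IntegrableOn (fun x : ℝ => x ^ (e - 1 - 0)) (Ioc 0 1) := by
    rw [← intervalIntegrable_iff_integrableOn_Ioc_of_le zero_le_one]
    exact intervalIntegral.intervalIntegrable_rpow' (by linarith)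
  have hfar : IntegrableOn (fun x : ℝ => x ^ (e - 1 - k)) (Ioi 1) :=
    integrableOn_Ioi_rpow_of_lt (by linarith) zero_lt_one
  rw [lintegral_mulHaar, lintegral_eq_two_mul_setLIntegral_Ioi_of_even (by simp [decayWeight]),
    ← Ioc_union_Ioi_eq_Ioi zero_le_one, lintegral_union measurableSet_Ioi (Ioc_disjoint_Ioi le_rfl)]
  refine ENNReal.mul_lt_top ENNReal.ofNat_lt_top (ENNReal.add_lt_top.2 ⟨?_, ?_⟩)
  · exact (setLIntegral_mono (by fun_prop) fun x hx => hle le_rfl (he.trans hek).le x hx.1).trans_lt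
      hnear.setLIntegral_lt_top
  · exact (setLIntegral_mono (by fun_prop) fun x hx => hle (he.trans hek).le le_rfl x
      (zero_lt_one.trans hx)).trans_lt hfar.setLIntegral_lt_top

theorem SchwartzMap.exists_norm_le_mul_prod_one_add_abs_rpow_neg {F : Type*}
    [NormedAddCommGroup F] [NormedSpace ℝ F] (M : SchwartzMap (ℝ × ℝ × ℝ × ℝ) F) (k : ℕ) :
    ∃ C, 0 ≤ C ∧ ∀ v : ℝ × ℝ × ℝ × ℝ, ‖M v‖ ≤ C * ((1 + |v.1|) ^ (-(k : ℝ)) *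
      ((1 + |v.2.1|) ^ (-(k : ℝ)) *
        ((1 + |v.2.2.1|) ^ (-(k : ℝ)) * (1 + |v.2.2.2|) ^ (-(k : ℝ))))) := by
  set C := 2 ^ (4 * k) * (Finset.Iic (4 * k, 0)).sup (fun m => SchwartzMap.seminorm ℝ m.1 m.2) M
  refine ⟨C, by positivity, fun v => ?_⟩
  have hdecay : (1 + ‖v‖) ^ (4 * k) * ‖M v‖ ≤ C := by
    simpa using M.one_add_le_sup_seminorm_apply (𝕜 := ℝ) (m := (4 * k, 0)) le_rfl le_rfl v
  have hcoord {x : ℝ} (hx : |x| ≤ ‖v‖) : (1 + ‖v‖) ^ (-(k : ℝ)) ≤ (1 + |x|) ^ (-(k : ℝ)) :=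
    Real.rpow_le_rpow_of_nonpos (by positivity) (by linarith) (by simp)
  have h₁ : |v.1| ≤ ‖v‖ := norm_fst_le v
  have h₂ : |v.2.1| ≤ ‖v‖ := (norm_fst_le v.2).trans (norm_snd_le v)
  have h₃ : |v.2.2.1| ≤ ‖v‖ := ((norm_fst_le v.2.2).trans (norm_snd_le v.2)).trans (norm_snd_le v)
  have h₄ : |v.2.2.2| ≤ ‖v‖ := ((norm_snd_le v.2.2).trans (norm_snd_le v.2)).trans (norm_snd_le v)
  have hpos : 0 < (1 + ‖v‖) ^ (4 * k) := by positivity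
  calc ‖M v‖ ≤ C * ((1 + ‖v‖) ^ (4 * k))⁻¹ := by
        rw [← div_eq_mul_inv, le_div_iff₀ hpos, mul_comm]; exact hdecay
    _ = C * ((1 + ‖v‖) ^ (-(k : ℝ)) * ((1 + ‖v‖) ^ (-(k : ℝ)) *
          ((1 + ‖v‖) ^ (-(k : ℝ)) * (1 + ‖v‖) ^ (-(k : ℝ))))) := by
        rw [Real.rpow_neg (by positivity), Real.rpow_natCast]; ring
    _ ≤ _ := by
        gcongr C * (?_ * (?_ * (?_ * ?_)))
        exacts [hcoord h₁, hcoord h₂, hcoord h₃, hcoord h₄]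

theorem max_one_rpow_neg_mul_rpow_le {w α θ : ℝ} (hw : 0 < w) (hθ : 0 ≤ θ) (hθα : θ ≤ α) :
    max 1 w ^ (-α) * w ^ α ≤ w ^ θ := by
  rcases le_total w 1 with hw1 | hw1
  · rw [max_eq_left hw1, Real.one_rpow, one_mul]
    exact Real.rpow_le_rpow_of_exponent_ge hw hw1 hθα
  · rw [max_eq_right hw1, ← Real.rpow_add hw, neg_add_cancel, Real.rpow_zero]
    exact Real.one_le_rpow hw1 hθ

theorem rpow_monomial_identity {t x₁ x₂ x₃ : ℝ} (ht : 0 < t) (h₁ : 0 < x₁) (h₂ : 0 < x₂)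
    (h₃ : 0 < x₃) (β γ θ σ : ℝ) :
    (x₁ * x₂ * x₃ / t) ^ (-σ) * (t / (x₁ * x₃)) ^ θ * (t / (x₁ * x₂ * x₃)) ^ (-β) *
        ((t / (x₂ * x₃)) ^ (β - 1) * x₃ ^ (γ - 1))
      = t ^ (θ + σ - 1) * (x₁ ^ (β - θ - σ) * (x₂ ^ (1 - σ) * x₃ ^ (γ - θ - σ))) := by
  rw [Real.rpow_def_of_pos (by positivity), Real.rpow_def_of_pos (by positivity),
    Real.rpow_def_of_pos (by positivity), Real.rpow_def_of_pos (by positivity),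
    Real.rpow_def_of_pos h₃, Real.rpow_def_of_pos ht, Real.rpow_def_of_pos h₁,
    Real.rpow_def_of_pos h₂, Real.rpow_def_of_pos h₃]
  simp only [← Real.exp_add]
  congr 1
  rw [Real.log_div (by positivity) ht.ne', Real.log_div ht.ne' (by positivity),
    Real.log_div ht.ne' (by positivity), Real.log_div ht.ne' (by positivity),
    Real.log_mul (by positivity) h₃.ne', Real.log_mul h₁.ne' h₂.ne',
    Real.log_mul h₁.ne' h₃.ne', Real.log_mul h₂.ne' h₃.ne']
  ring

section

variable {F : Type*} [NormedAddCommGroup F] [NormedSpace ℝ F]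

def tripleIntegrand (d₁ d₂ d₃ : ℕ) (M : SchwartzMap (ℝ × ℝ × ℝ × ℝ) F) (c : ℝ)
    (a : ℝ × ℝ × ℝ) : ℝ :=
  ‖M (c / (a.1 * a.2.1 * a.2.2), a.1 * c / (a.1 * a.2.1 * a.2.2),
      a.2.1 * c / (a.1 * a.2.1 * a.2.2), a.2.2)‖ *
    max 1 |a.1| ^ (1 - (d₁ : ℝ) / 2) *
    |a.1 * a.2.1 * a.2.2 / c| ^ (-(d₂ : ℝ) / 2) *
    (|a.1| ^ ((d₁ : ℝ) / 2 - 1) * |a.2.1| ^ ((d₂ : ℝ) / 2 - 1) *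
      |a.2.2| ^ ((d₃ : ℝ) / 2 - 1))

theorem measurable_tripleIntegrand (d₁ d₂ d₃ : ℕ) (M : SchwartzMap (ℝ × ℝ × ℝ × ℝ) F) (c : ℝ) :
    Measurable (tripleIntegrand d₁ d₂ d₃ M c) := by
  have hM : Measurable fun v => ‖M v‖ := M.continuous.norm.measurable
  unfold tripleIntegrand
  exact (hM.comp (by fun_prop)).mul (by fun_prop) |>.mul (by fun_prop) |>.mul (by fun_prop)

theorem tripleIntegrand_subst_le {d₁ d₂ d₃ : ℕ} {M : SchwartzMap (ℝ × ℝ × ℝ × ℝ) F} {CM k : ℝ}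
    (hM : ∀ v : ℝ × ℝ × ℝ × ℝ, ‖M v‖ ≤ CM * ((1 + |v.1|) ^ (-k) *
      ((1 + |v.2.1|) ^ (-k) * ((1 + |v.2.2.1|) ^ (-k) * (1 + |v.2.2.2|) ^ (-k)))))
    {θ σ : ℝ} (hθ : 0 ≤ θ) (hθd₁ : θ ≤ (d₁ : ℝ) / 2 - 1) (hσ : 0 ≤ σ) (hσk : σ ≤ k)
    {c b₁ b₂ b₃ : ℝ} (hc : c ≠ 0) (h₁ : b₁ ≠ 0) (h₂ : b₂ ≠ 0) (h₃ : b₃ ≠ 0) :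
    tripleIntegrand d₁ d₂ d₃ M c (c / (b₁ * b₃), c / (b₂ * b₃), b₃)
      ≤ CM * |c| ^ (θ + σ - 1) * (decayWeight k ((d₂ : ℝ) / 2 - θ - σ) b₁ *
        (decayWeight k (1 - σ) b₂ * decayWeight k ((d₃ : ℝ) / 2 - θ - σ) b₃)) := by
  have hA : c / (c / (b₁ * b₃) * (c / (b₂ * b₃)) * b₃) = b₁ * b₂ * b₃ / c := by field_simp
  have hB : c / (b₁ * b₃) * c / (c / (b₁ * b₃) * (c / (b₂ * b₃)) * b₃) = b₂ := by field_simp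
  have hC : c / (b₂ * b₃) * c / (c / (b₁ * b₃) * (c / (b₂ * b₃)) * b₃) = b₁ := by field_simp
  have hD : c / (b₁ * b₃) * (c / (b₂ * b₃)) * b₃ / c = c / (b₁ * b₂ * b₃) := by field_simp
  have hCM : 0 ≤ CM := by
    simpa using (norm_nonneg _).trans (hM 0)
  have hM' := hM (b₁ * b₂ * b₃ / c, b₂, b₁, b₃)
  simp only [tripleIntegrand, hA, hB, hC, hD]
  rw [show (1 : ℝ) - d₁ / 2 = -(d₁ / 2 - 1) by ring, neg_div]
  simp only [abs_div, abs_mul] at hM' ⊢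
  have ht : 0 < |c| := abs_pos.2 hc
  have hx₁ : 0 < |b₁| := abs_pos.2 h₁
  have hx₂ : 0 < |b₂| := abs_pos.2 h₂
  have hx₃ : 0 < |b₃| := abs_pos.2 h₃
  set t := |c|
  set x₁ := |b₁|
  set x₂ := |b₂|
  set x₃ := |b₃|
  set w := t / (x₁ * x₃)
  set A := x₁ * x₂ * x₃ / t
  set P := (1 + x₂) ^ (-k) * ((1 + x₁) ^ (-k) * (1 + x₃) ^ (-k))
  set α := (d₁ : ℝ) / 2 - 1
  set β := (d₂ : ℝ) / 2
  calc ‖M (b₁ * b₂ * b₃ / c, b₂, b₁, b₃)‖ * max 1 w ^ (-α) * (t / (x₁ * x₂ * x₃)) ^ (-β) *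
        (w ^ α * (t / (x₂ * x₃)) ^ (β - 1) * x₃ ^ ((d₃ : ℝ) / 2 - 1))
      ≤ CM * ((1 + A) ^ (-k) * P) * max 1 w ^ (-α) * (t / (x₁ * x₂ * x₃)) ^ (-β) *
        (w ^ α * (t / (x₂ * x₃)) ^ (β - 1) * x₃ ^ ((d₃ : ℝ) / 2 - 1)) := by
        gcongr
    _ = CM * P * ((1 + A) ^ (-k) * (max 1 w ^ (-α) * w ^ α) * (t / (x₁ * x₂ * x₃)) ^ (-β) *
        ((t / (x₂ * x₃)) ^ (β - 1) * x₃ ^ ((d₃ : ℝ) / 2 - 1))) := by ring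
    _ ≤ CM * P * (A ^ (-σ) * w ^ θ * (t / (x₁ * x₂ * x₃)) ^ (-β) *
        ((t / (x₂ * x₃)) ^ (β - 1) * x₃ ^ ((d₃ : ℝ) / 2 - 1))) := by
        gcongr
        · exact one_add_rpow_neg_le_rpow_neg (by positivity) hσ hσk
        · exact max_one_rpow_neg_mul_rpow_le (by positivity) hθ hθd₁
    _ = _ := by
        rw [rpow_monomial_identity ht hx₁ hx₂ hx₃]
        simp only [decayWeight]
        ring

theorem exists_lintegral_tripleIntegrand_le (d₁ d₂ d₃ : ℕ) (M : SchwartzMap (ℝ × ℝ × ℝ × ℝ) F)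
    {θ σ : ℝ} (hθ : 0 ≤ θ) (hθd₁ : θ ≤ (d₁ : ℝ) / 2 - 1) (hσ : 0 ≤ σ) (hσ1 : σ < 1)
    (hd₂ : θ + σ < (d₂ : ℝ) / 2) (hd₃ : θ + σ < (d₃ : ℝ) / 2) :
    ∃ C, 0 < C ∧ ∀ c : ℝ, c ≠ 0 →
      ∫⁻ a, ENNReal.ofReal (tripleIntegrand d₁ d₂ d₃ M c a) ∂mulHaar3
        ≤ ENNReal.ofReal (C * |c| ^ (θ + σ - 1)) := by
  -- any decay order exceeding the exponents `e₁, e₂, e₃` below would do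
  obtain ⟨CM, hCM, hM⟩ := M.exists_norm_le_mul_prod_one_add_abs_rpow_neg (d₂ + d₃ + 2)
  set k : ℝ := ((d₂ + d₃ + 2 : ℕ) : ℝ) with hk
  push_cast at hk
  set G : ℝ → ℝ → ℝ≥0∞ := fun e b => ENNReal.ofReal (decayWeight k e b)
  set e₁ : ℝ := d₂ / 2 - θ - σ with he₁
  set e₂ : ℝ := 1 - σ with he₂
  set e₃ : ℝ := d₃ / 2 - θ - σ with he₃
  set J := (∫⁻ b, G e₁ b ∂mulHaar) * ((∫⁻ b, G e₂ b ∂mulHaar) * ∫⁻ b, G e₃ b ∂mulHaar)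
  have hJ : J < ∞ := by
    have : (0 : ℝ) ≤ d₂ ∧ (0 : ℝ) ≤ d₃ := ⟨d₂.cast_nonneg, d₃.cast_nonneg⟩
    refine ENNReal.mul_lt_top ?_ (ENNReal.mul_lt_top ?_ ?_) <;>
      refine lintegral_mulHaar_decayWeight_lt_top ?_ ?_ <;> linarith
  refine ⟨CM * J.toReal + 1, by positivity, fun c hc => ?_⟩
  have hG (e : ℝ) : Measurable (G e) := (measurable_decayWeight k e).ennreal_ofReal
  calc ∫⁻ a, ENNReal.ofReal (tripleIntegrand d₁ d₂ d₃ M c a) ∂mulHaar3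
      = ∫⁻ b, ENNReal.ofReal (tripleIntegrand d₁ d₂ d₃ M c
          (c / (b.1 * b.2.2), c / (b.2.1 * b.2.2), b.2.2)) ∂mulHaar3 :=
        lintegral_mulHaar3_comp_subst hc (measurable_tripleIntegrand d₁ d₂ d₃ M c).ennreal_ofReal
    _ ≤ ∫⁻ b, ENNReal.ofReal (CM * |c| ^ (θ + σ - 1)) *
          (G e₁ b.1 * (G e₂ b.2.1 * G e₃ b.2.2)) ∂mulHaar3 := by
        refine lintegral_mono_ae ?_
        filter_upwards [ae_mulHaar3_ne_zero] with b ⟨h₁, h₂, h₃⟩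
        simp only [G, ← ENNReal.ofReal_mul (decayWeight_nonneg ..),
          ← ENNReal.ofReal_mul (by positivity : 0 ≤ CM * |c| ^ (θ + σ - 1))]
        exact ENNReal.ofReal_le_ofReal
          (tripleIntegrand_subst_le hM hθ hθd₁ hσ (by linarith) hc h₁ h₂ h₃)
    _ = ENNReal.ofReal (CM * |c| ^ (θ + σ - 1)) * ENNReal.ofReal J.toReal := by
        rw [lintegral_const_mul' _ _ ENNReal.ofReal_ne_top,
          lintegral_mulHaar3_mul (hG e₁) (hG e₂) (hG e₃), ENNReal.ofReal_toReal hJ.ne]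
    _ ≤ ENNReal.ofReal ((CM * J.toReal + 1) * |c| ^ (θ + σ - 1)) := by
        rw [← ENNReal.ofReal_mul (by positivity)]
        refine ENNReal.ofReal_le_ofReal ?_
        have : 0 ≤ |c| ^ (θ + σ - 1) := by positivity
        nlinarith

end

theorem stmt11_general
    (d₁ d₂ d₃ : ℕ)
    (hd₁ : 4 ≤ d₁) (hd₂ : 4 ≤ d₂) (hd₃ : 4 ≤ d₃)
    (ε : ℝ) (hε0 : 0 < ε) (hε : ε < 1 / 2)
    (M₂ : SchwartzMap (ℝ × ℝ × ℝ × ℝ) ℂ) :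
    ∃ C : ℝ, 0 < C ∧
      ∀ c : ℝ, c ≠ 0 →
        (∫⁻ a : ℝ × ℝ × ℝ, ENNReal.ofReal
            (‖M₂ (c / (a.1 * a.2.1 * a.2.2), a.1 * c / (a.1 * a.2.1 * a.2.2),
                a.2.1 * c / (a.1 * a.2.1 * a.2.2), a.2.2)‖ *
              max 1 |a.1| ^ (1 - (d₁ : ℝ) / 2) *
              |a.1 * a.2.1 * a.2.2 / c| ^ (-(d₂ : ℝ) / 2) *
              (|a.1| ^ ((d₁ : ℝ) / 2 - 1) * |a.2.1| ^ ((d₂ : ℝ) / 2 - 1) *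
                |a.2.2| ^ ((d₃ : ℝ) / 2 - 1))) ∂mulHaar3)
        ≤ ENNReal.ofReal
            (C * min 1 |c| ^ ((min d₁ (min d₂ d₃) : ℝ) / 2 - 1 - ε) *
              max 1 |c| ^ (-1 : ℝ)) := by
  set m : ℝ := min (d₁ : ℝ) (min (d₂ : ℝ) (d₃ : ℝ))
  have hm₁ : m ≤ d₁ := min_le_left _ _
  have hm₂ : m ≤ d₂ := (min_le_right _ _).trans (min_le_left _ _)
  have hm₃ : m ≤ d₃ := (min_le_right _ _).trans (min_le_right _ _)
  have hm : 4 ≤ m := le_min (mod_cast hd₁) (le_min (mod_cast hd₂) (mod_cast hd₃))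
  obtain ⟨C₀, hC₀, hsmall⟩ := exists_lintegral_tripleIntegrand_le d₁ d₂ d₃ M₂
    (θ := m / 2 - 1 - ε / 2) (σ := 1 - ε / 2) (by linarith) (by linarith) (by linarith)
    (by linarith) (by linarith) (by linarith)
  obtain ⟨C₁, hC₁, hlarge⟩ := exists_lintegral_tripleIntegrand_le d₁ d₂ d₃ M₂
    le_rfl (by linarith) le_rfl one_pos (by linarith) (by linarith)
  refine ⟨C₀ + C₁, by positivity, fun c hc => ?_⟩
  rcases le_or_gt |c| 1 with hc1 | hc1
  · rw [min_eq_right hc1, max_eq_left hc1, Real.one_rpow, mul_one]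
    refine (hsmall c hc).trans (ENNReal.ofReal_le_ofReal ?_)
    rw [show m / 2 - 1 - ε / 2 + (1 - ε / 2) - 1 = m / 2 - 1 - ε by ring]
    gcongr
    linarith
  · rw [min_eq_left hc1.le, max_eq_right hc1.le, Real.one_rpow, mul_one]
    refine (hlarge c hc).trans (ENNReal.ofReal_le_ofReal ?_)
    rw [show (0 : ℝ) + 0 - 1 = -1 by ring]
    gcongr
    linarith

/-- Lemma 9.7 (archimedean case `F = ℝ`). -/
theorem stmt11
    (d₁ d₂ d₃ : ℕ) (hd₁e : Even d₁) (hd₂e : Even d₂) (hd₃e : Even d₃)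
    (hd₁ : 4 ≤ d₁) (hd₂ : 4 ≤ d₂) (hd₃ : 4 ≤ d₃)
    (ε : ℝ) (hε0 : 0 < ε) (hε : ε < 1 / 2)
    (M₂ : SchwartzMap (ℝ × ℝ × ℝ × ℝ) ℂ) :
    ∃ C : ℝ, 0 < C ∧
      ∀ c : ℝ, c ≠ 0 →
        (∫⁻ a : ℝ × ℝ × ℝ, ENNReal.ofReal
            (‖M₂ (c / (a.1 * a.2.1 * a.2.2), a.1 * c / (a.1 * a.2.1 * a.2.2),
                a.2.1 * c / (a.1 * a.2.1 * a.2.2), a.2.2)‖ *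
              max 1 |a.1| ^ (1 - (d₁ : ℝ) / 2) *
              |a.1 * a.2.1 * a.2.2 / c| ^ (-(d₂ : ℝ) / 2) *
              (|a.1| ^ ((d₁ : ℝ) / 2 - 1) * |a.2.1| ^ ((d₂ : ℝ) / 2 - 1) *
                |a.2.2| ^ ((d₃ : ℝ) / 2 - 1))) ∂mulHaar3)
        ≤ ENNReal.ofReal
            (C * min 1 |c| ^ ((min d₁ (min d₂ d₃) : ℝ) / 2 - 1 - ε) *
              max 1 |c| ^ (-1 : ℝ)) :=
  stmt11_general d₁ d₂ d₃ hd₁ hd₂ hd₃ ε hε0 hε M₂
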